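/- Let δ ∈ (0,2) and β > 0, and let L : ℝ → ℝ be a measurable function satisfying |L(θ)| ≤ β·exp(|θ|^{2−δ}) for all θ ∈ ℝ. Then for every σ > 0 and every θ ∈ ℝ, the PGPE symmetric-difference gradient estimator is unbiased for the gradient of the Gaussian smoothed loss: (1/(2σ²))·E_{ε ~ N(0,σ²)}[ε·(L(θ + ε) − L(θ − ε))] = L_σ′(θ). -/

import Mathlib

open MeasureTheory ProbabilityTheory Real
open scoped ENNReal NNReal

/-- The Gaussian smoothing `L_σ(θ) = E_{ε ~ N(0,σ²)}[L (θ + ε)]` of a loss `L`. -/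
noncomputable def gaussianSmoothing (L : ℝ → ℝ) (σ θ : ℝ) : ℝ :=
  ∫ ε, L (θ + ε) ∂(gaussianReal 0 ⟨σ ^ 2, sq_nonneg σ⟩)

private lemma rpow_le_quad' {p : ℝ} (hp0 : 0 < p) (hp2 : p < 2) {a : ℝ} (ha : 0 < a) :
    ∃ M : ℝ, 0 ≤ M ∧ ∀ x : ℝ, |x| ^ p ≤ a * x ^ 2 + M := by
  set R : ℝ := a ^ (-(1 / (2 - p))) with hR
  have hRpos : 0 < R := rpow_pos_of_pos ha _
  refine ⟨R ^ p, (rpow_pos_of_pos hRpos p).le, fun x => ?_⟩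
  rcases le_total |x| R with h | h
  · have h1 : |x| ^ p ≤ R ^ p := rpow_le_rpow (abs_nonneg x) h hp0.le
    nlinarith [mul_nonneg ha.le (sq_nonneg x)]
  · have hx : 0 < |x| := hRpos.trans_le h
    have h1 : |x| ^ p = |x| ^ (2 : ℝ) * |x| ^ (p - 2) := by
      rw [← rpow_add hx]; ring_nf
    have h2 : |x| ^ (p - 2) ≤ R ^ (p - 2) :=
      rpow_le_rpow_of_nonpos hRpos h (by linarith)
    have h3 : R ^ (p - 2) = a := by
      have hne : (2:ℝ) - p ≠ 0 := fun h => by linarith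
      rw [hR, ← rpow_mul ha.le]
      rw [show -(1 / (2 - p)) * (p - 2) = 1 from by field_simp; ring]
      exact rpow_one a
    have h4 : |x| ^ (2 : ℝ) = x ^ 2 := by
      rw [show (2 : ℝ) = ((2 : ℕ) : ℝ) by norm_num, rpow_natCast, sq_abs]
    have h5 : |x| ^ p ≤ x ^ 2 * a := by
      rw [h1, h4, ← h3]
      exact mul_le_mul_of_nonneg_left h2 (sq_nonneg x)
    nlinarith [rpow_pos_of_pos hRpos p]

private lemma integrable_exp_aux' {p : ℝ} (hp0 : 0 < p) (hp2 : p < 2) {a : ℝ} (ha : 0 < a) :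
    Integrable (fun x : ℝ => Real.exp (|x| + |x| ^ p - a * x ^ 2)) := by
  obtain ⟨M, hM0, hM⟩ := rpow_le_quad' hp0 hp2 (show (0:ℝ) < a / 4 by linarith)
  have key : ∀ x : ℝ, |x| + |x| ^ p - a * x ^ 2 ≤ (M + 2 / a) - a / 2 * x ^ 2 := by
    intro x
    have h1 := hM x
    have h2' : 8 * (a * |x|) ≤ a ^ 2 * x ^ 2 + 16 := by
      nlinarith [sq_nonneg (a * |x| - 4), sq_abs x]
    have h2 : |x| ≤ a / 8 * x ^ 2 + 2 / a := by
      calc |x| = 8 * (a * |x|) / (8 * a) := by field_simp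
        _ ≤ (a ^ 2 * x ^ 2 + 16) / (8 * a) := by
            exact (div_le_div_iff_of_pos_right (by positivity)).mpr h2'
        _ = a / 8 * x ^ 2 + 2 / a := by field_simp; ring
    linarith [mul_nonneg ha.le (sq_nonneg x)]
  refine ((integrable_exp_neg_mul_sq (show (0:ℝ) < a / 2 by linarith)).const_mul
    (Real.exp (M + 2 / a))).mono' ?_ ?_
  · refine Continuous.aestronglyMeasurable ?_
    have h : Continuous fun x : ℝ => |x| ^ p := continuous_abs.rpow_const fun x => Or.inr hp0.le
    exact Real.continuous_exp.comp
      ((continuous_abs.add h).sub (continuous_const.mul (continuous_pow 2)))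
  · filter_upwards with x
    rw [Real.norm_eq_abs, Real.abs_exp, ← Real.exp_add]
    exact Real.exp_le_exp.mpr (by linarith [key x])

/-- Under the growth bound, the PGPE symmetric-difference gradient
estimator is unbiased for the gradient of the Gaussian smoothed loss:
`(1/(2σ²)) · E_{ε ~ N(0,σ²)}[ε · (L(θ + ε) − L(θ − ε))] = L_σ′(θ)`. -/
theorem pgpe_symmetric_estimator_unbiased
    (δ β : ℝ) (hδ : δ ∈ Set.Ioo (0 : ℝ) 2) (hβ : 0 < β)
    (L : ℝ → ℝ) (hL : Measurable L)
    (hgrowth : ∀ θ : ℝ, |L θ| ≤ β * Real.exp (|θ| ^ (2 - δ)))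
    (σ : ℝ) (hσ : 0 < σ) (θ : ℝ) :
    (1 / (2 * σ ^ 2)) *
        ∫ ε, ε * (L (θ + ε) - L (θ - ε)) ∂(gaussianReal 0 ⟨σ ^ 2, sq_nonneg σ⟩) =
      deriv (fun t : ℝ => gaussianSmoothing L σ t) θ := by
  obtain ⟨hδ0, hδ2⟩ := hδ
  have hp0 : (0:ℝ) < 2 - δ := by linarith
  have hp2 : (2:ℝ) - δ < 2 := by linarith
  set p : ℝ := 2 - δ with hp
  set v : ℝ≥0 := (⟨σ ^ 2, sq_nonneg σ⟩ : ℝ≥0) with hv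
  have hV : (0:ℝ) < σ ^ 2 := by positivity
  have hVne : (σ:ℝ) ^ 2 ≠ 0 := hV.ne'
  have hvne : v ≠ 0 := by
    intro h
    have : (v : ℝ) = 0 := by rw [h]; rfl
    exact hVne this
  set V : ℝ := σ ^ 2 with hVdef
  have hc0 : (0:ℝ) < (Real.sqrt (2 * π * V))⁻¹ := by
    have : (0:ℝ) < 2 * π * V := by positivity
    positivity
  set c : ℝ := (Real.sqrt (2 * π * V))⁻¹ with hc
  have hpdf : ∀ m x : ℝ, gaussianPDFReal m v x = c * Real.exp (-(x - m) ^ 2 / (2 * V)) :=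
    fun m x => rfl
  -- conversion of Gaussian integrals to Lebesgue integrals
  have hconv : ∀ (m : ℝ) (f : ℝ → ℝ),
      ∫ x, f x ∂(gaussianReal m v) = ∫ x, gaussianPDFReal m v x * f x := by
    intro m f
    rw [gaussianReal_of_var_ne_zero m hvne, gaussianPDF_def]
    rw [show (fun x => ENNReal.ofReal (gaussianPDFReal m v x))
        = (fun x => ((Real.toNNReal (gaussianPDFReal m v x)) : ℝ≥0∞)) from rfl]
    rw [integral_withDensity_eq_integral_smul ((measurable_gaussianPDFReal m v).real_toNNReal) f]
    congr 1
    funext x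
    simp [NNReal.smul_def, Real.coe_toNNReal _ (gaussianPDFReal_nonneg m v x)]
  -- key derivative via dominated convergence
  set A : ℝ := β * Real.exp (|θ| + 1) * c * Real.exp (1 / (2 * V) + θ ^ 2 / (4 * V)) / V with hA
  have hKey := hasDerivAt_integral_of_dominated_loc_of_deriv_le
    (F := fun t x => L x * gaussianPDFReal t v x)
    (F' := fun t x => L x * ((x - t) / V * gaussianPDFReal t v x))
    (bound := fun x => A * Real.exp (|x| + |x| ^ p - (8 * V)⁻¹ * x ^ 2))
    (μ := volume) (x₀ := θ) (s := Metric.ball θ 1) (Metric.ball_mem_nhds θ one_pos)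
    (Filter.Eventually.of_forall fun t =>
      (hL.mul (measurable_gaussianPDFReal t v)).aestronglyMeasurable)
    ?hFint
    ((hL.mul (((measurable_id.sub measurable_const).div_const V).mul
      (measurable_gaussianPDFReal θ v))).aestronglyMeasurable)
    ?hbound ?hboundint ?hdiff
  case hFint =>
    -- integrability of x ↦ L x * gaussianPDFReal θ v x
    refine ((integrable_exp_aux' hp0 hp2 (show (0:ℝ) < (8 * V)⁻¹ by positivity)).const_mul
      (β * c * Real.exp (θ ^ 2 / (2 * V)))).mono'
      ((hL.mul (measurable_gaussianPDFReal θ v)).aestronglyMeasurable) ?_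
    filter_upwards with x
    rw [Real.norm_eq_abs, abs_mul, abs_of_nonneg (gaussianPDFReal_nonneg θ v x), hpdf]
    have e1 : -(x - θ) ^ 2 / (2 * V) ≤ θ ^ 2 / (2 * V) + (|x| - (8 * V)⁻¹ * x ^ 2) := by
      have hnum : x ^ 2 - (4 * (x - θ) ^ 2 + 4 * θ ^ 2 + 8 * V * |x|) ≤ 0 := by
        nlinarith [sq_nonneg (3 * x - 4 * θ), mul_nonneg (mul_nonneg (by norm_num : (0:ℝ) ≤ 8) hV.le) (abs_nonneg x)]
      have heq : -(x - θ) ^ 2 / (2 * V) - (θ ^ 2 / (2 * V) + (|x| - (8 * V)⁻¹ * x ^ 2))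
          = (x ^ 2 - (4 * (x - θ) ^ 2 + 4 * θ ^ 2 + 8 * V * |x|)) / (8 * V) := by
        field_simp
        ring
      have := div_nonpos_of_nonpos_of_nonneg hnum (by positivity : (0:ℝ) ≤ 8 * V)
      linarith [heq ▸ this]
    calc |L x| * (c * Real.exp (-(x - θ) ^ 2 / (2 * V)))
        ≤ (β * Real.exp (|x| ^ p)) * (c * Real.exp (θ ^ 2 / (2 * V) + (|x| - (8 * V)⁻¹ * x ^ 2))) := by
          gcongr
          exact hgrowth x
      _ = β * c * Real.exp (θ ^ 2 / (2 * V)) * Real.exp (|x| + |x| ^ p - (8 * V)⁻¹ * x ^ 2) := by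
          rw [show Real.exp (θ ^ 2 / (2 * V) + (|x| - (8 * V)⁻¹ * x ^ 2))
              = Real.exp (θ ^ 2 / (2 * V)) * Real.exp (|x| - (8 * V)⁻¹ * x ^ 2) from by
            rw [← Real.exp_add]]
          rw [show Real.exp (|x| + |x| ^ p - (8 * V)⁻¹ * x ^ 2)
              = Real.exp (|x| ^ p) * Real.exp (|x| - (8 * V)⁻¹ * x ^ 2) from by
            rw [← Real.exp_add]; congr 1; ring]
          ring
  case hbound =>
    filter_upwards with x
    intro t ht
    have ht1 : |t - θ| < 1 := by rwa [Metric.mem_ball, Real.dist_eq] at ht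
    have htθ : |t| ≤ |θ| + 1 := by
      calc |t| = |θ + (t - θ)| := by ring_nf
        _ ≤ |θ| + |t - θ| := abs_add_le _ _
        _ ≤ |θ| + 1 := by linarith
    have e1 : -(x - t) ^ 2 / (2 * V) ≤ 1 / (2 * V) + θ ^ 2 / (4 * V) + (-((8 * V)⁻¹ * x ^ 2)) := by
      have ht2 : (t - θ) ^ 2 ≤ 1 := by nlinarith [abs_nonneg (t - θ), sq_abs (t - θ)]
      have hnum : x ^ 2 - (4 * (x - t) ^ 2 + 4 + 2 * θ ^ 2) ≤ 0 := by
        nlinarith [sq_nonneg (x - 2 * t + θ), sq_nonneg (x - 2 * θ)]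
      have heq : -(x - t) ^ 2 / (2 * V) - (1 / (2 * V) + θ ^ 2 / (4 * V) + (-((8 * V)⁻¹ * x ^ 2)))
          = (x ^ 2 - (4 * (x - t) ^ 2 + 4 + 2 * θ ^ 2)) / (8 * V) := by
        field_simp
        ring
      have := div_nonpos_of_nonpos_of_nonneg hnum (by positivity : (0:ℝ) ≤ 8 * V)
      linarith [heq ▸ this]
    have habs : |x - t| ≤ Real.exp (|θ| + 1) * Real.exp |x| := by
      calc |x - t| ≤ |x| + |t| := abs_sub _ _
        _ ≤ |x| + |θ| + 1 := by linarith
        _ ≤ Real.exp (|x| + |θ|) := by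
            have := Real.add_one_le_exp (|x| + |θ|)
            linarith
        _ ≤ Real.exp (|θ| + 1) * Real.exp |x| := by
            rw [← Real.exp_add]
            exact Real.exp_le_exp.mpr (by linarith)
    rw [Real.norm_eq_abs]
    calc |L x * ((x - t) / V * gaussianPDFReal t v x)|
        = |L x| * (|x - t| * (c * Real.exp (-(x - t) ^ 2 / (2 * V)))) / V := by
          rw [hpdf, abs_mul, abs_mul, abs_div, abs_of_pos hV,
            abs_of_nonneg (by positivity : (0:ℝ) ≤ c * Real.exp (-(x - t) ^ 2 / (2 * V)))]
          ring
      _ ≤ (β * Real.exp (|x| ^ p)) * ((Real.exp (|θ| + 1) * Real.exp |x|) *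
            (c * Real.exp (1 / (2 * V) + θ ^ 2 / (4 * V) + (-((8 * V)⁻¹ * x ^ 2))))) / V := by
          have he1 := Real.exp_le_exp.mpr e1
          gcongr <;> first
            | exact hgrowth x
            | exact habs
            | exact he1
            | skip
      _ = A * Real.exp (|x| + |x| ^ p - (8 * V)⁻¹ * x ^ 2) := by
          rw [hA]
          rw [show Real.exp (1 / (2 * V) + θ ^ 2 / (4 * V) + (-((8 * V)⁻¹ * x ^ 2)))
              = Real.exp (1 / (2 * V) + θ ^ 2 / (4 * V)) * Real.exp (-((8 * V)⁻¹ * x ^ 2)) from by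
            rw [← Real.exp_add]]
          rw [show Real.exp (|x| + |x| ^ p - (8 * V)⁻¹ * x ^ 2)
              = Real.exp (|x| ^ p) * (Real.exp |x| * Real.exp (-((8 * V)⁻¹ * x ^ 2))) from by
            rw [← Real.exp_add, ← Real.exp_add]; congr 1; ring]
          ring
  case hboundint =>
    exact (integrable_exp_aux' hp0 hp2 (show (0:ℝ) < (8 * V)⁻¹ by positivity)).const_mul A
  case hdiff =>
    filter_upwards with x
    intro t _
    have h0 : (fun s : ℝ => L x * gaussianPDFReal s v x)
        = fun s : ℝ => L x * (c * Real.exp (-(x - s) ^ 2 / (2 * V))) := by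
      funext s; rw [hpdf]
    rw [h0]
    have h1 : HasDerivAt (fun s : ℝ => -(x - s) ^ 2 / (2 * V)) ((x - t) / V) t := by
      have hid : HasDerivAt (fun s : ℝ => x - s) (-1) t := (hasDerivAt_id t).const_sub x
      have h2 := ((hid.pow 2).neg).div_const (2 * V)
      exact h2.congr_deriv (by field_simp; ring)
    have h3 := ((h1.exp).const_mul c).const_mul (L x)
    exact h3.congr_deriv (by simp only [hpdf]; ring)
  obtain ⟨hI, hderiv⟩ := hKey
  -- identify the smoothed loss with an explicit Lebesgue integral
  have hg : ∀ t : ℝ, gaussianSmoothing L σ t = ∫ x, L x * gaussianPDFReal t v x := by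
    intro t
    show (∫ ε, L (t + ε) ∂(gaussianReal 0 v)) = _
    rw [hconv 0 (fun ε => L (t + ε))]
    rw [← integral_sub_right_eq_self (fun x => gaussianPDFReal 0 v x * L (t + x)) t]
    congr 1
    funext x
    rw [hpdf, hpdf]
    rw [show t + (x - t) = x by ring]
    rw [show -(x - t - 0) ^ 2 / (2 * V) = -(x - t) ^ 2 / (2 * V) by ring]
    ring
  have hDeriv : deriv (fun t : ℝ => gaussianSmoothing L σ t)  θ
      = ∫ x, L x * ((x - θ) / V * gaussianPDFReal θ v x) := by
    have hfun : (fun t : ℝ => gaussianSmoothing L σ t)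
        = fun t : ℝ => ∫ x, L x * gaussianPDFReal t v x := funext hg
    rw [hfun]
    exact hderiv.deriv
  -- the three Gaussian integrals as Lebesgue integrals
  have hplus : ∫ ε, ε * L (θ + ε) ∂(gaussianReal 0 v)
      = ∫ x, gaussianPDFReal θ v x * ((x - θ) * L x) := by
    rw [hconv 0 (fun ε => ε * L (θ + ε))]
    rw [← integral_sub_right_eq_self (fun x => gaussianPDFReal 0 v x * (x * L (θ + x))) θ]
    congr 1
    funext x
    rw [hpdf, hpdf]
    rw [show θ + (x - θ) = x by ring]
    rw [show -(x - θ - 0) ^ 2 / (2 * V) = -(x - θ) ^ 2 / (2 * V) by ring]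
    try ring
  have hminus : ∫ ε, ε * L (θ - ε) ∂(gaussianReal 0 v)
      = - ∫ x, gaussianPDFReal θ v x * ((x - θ) * L x) := by
    rw [← hplus]
    rw [hconv 0 (fun ε => ε * L (θ - ε)), hconv 0 (fun ε => ε * L (θ + ε))]
    rw [← integral_neg_eq_self (fun ε => gaussianPDFReal 0 v ε * (ε * L (θ - ε))) volume,
      ← integral_neg]
    congr 1
    funext x
    rw [hpdf 0 (-x), hpdf 0 x]
    rw [show θ - -x = θ + x from by ring]
    rw [show -(-x - 0) ^ 2 / (2 * V) = -(x - 0) ^ 2 / (2 * V) by ring]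
    try ring
  -- integrability of the two pieces, for splitting the integral
  have hG : Integrable (fun x => gaussianPDFReal θ v x * ((x - θ) * L x)) := by
    refine (hI.const_mul V).congr (Filter.Eventually.of_forall fun x => ?_)
    have : gaussianPDFReal θ v x ≠ 0 := (gaussianPDFReal_pos θ v x hvne).ne'
    field_simp
  have hIp : Integrable (fun ε => gaussianPDFReal 0 v ε * (ε * L (θ + ε))) := by
    refine ((hG.comp_add_right θ).congr (Filter.Eventually.of_forall fun x => ?_))
    dsimp only
    rw [hpdf, hpdf]
    ring_nf
  have hIm : Integrable (fun ε => gaussianPDFReal 0 v ε * (ε * L (θ - ε))) := by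
    refine (((hG.comp_add_left θ).comp_neg).neg.congr
      (Filter.Eventually.of_forall fun x => ?_))
    simp only [Pi.neg_apply]
    rw [hpdf, hpdf]
    ring_nf
  have hsplit : ∫ ε, ε * (L (θ + ε) - L (θ - ε)) ∂(gaussianReal 0 v)
      = (∫ ε, ε * L (θ + ε) ∂(gaussianReal 0 v)) - ∫ ε, ε * L (θ - ε) ∂(gaussianReal 0 v) := by
    rw [hconv 0 (fun ε => ε * (L (θ + ε) - L (θ - ε))), hconv 0 (fun ε => ε * L (θ + ε)),
      hconv 0 (fun ε => ε * L (θ - ε))]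
    rw [show (fun x => gaussianPDFReal 0 v x * (x * (L (θ + x) - L (θ - x))))
        = fun x => (gaussianPDFReal 0 v x * (x * L (θ + x)))
            - gaussianPDFReal 0 v x * (x * L (θ - x)) from funext fun x => by ring]
    exact integral_sub hIp hIm
  rw [hDeriv, hsplit, hplus, hminus]
  rw [show (∫ x, L x * ((x - θ) / V * gaussianPDFReal θ v x))
      = V⁻¹ * ∫ x, gaussianPDFReal θ v x * ((x - θ) * L x) from by
    rw [← integral_const_mul]
    congr 1
    funext x
    field_simp]
  rw [hVdef]
  field_simp
  ring
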